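/- arXiv:1411.6887 — 4 statements merged into one kernel-verified Lean document; each statement's English description precedes it below -/
import Mathlib

section
/- Let G be an entirely looped graph with loops and let H₁, H₂ be graphs with loops such that N(H₁) is isomorphic to N(H₂). Then G □ H₁ is isomorphic to G □ H₂. -/
universe u

/-- A graph with loops on a vertex type `V`: a symmetric binary relation. -/
structure LoopGraph (V : Type*) where
  adj : V → V → Prop
  symm : ∀ u v, adj u v → adj v u

namespace LoopGraph

/-- The Cartesian product `G □ H` of two graphs with loops. -/
def box {V W : Type*} (G : LoopGraph V) (H : LoopGraph W) : LoopGraph (V × W) where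
  adj p q := (G.adj p.1 q.1 ∧ p.2 = q.2) ∨ (p.1 = q.1 ∧ H.adj p.2 q.2)
  symm p q h := by
    rcases h with ⟨h, e⟩ | ⟨e, h⟩
    · exact Or.inl ⟨G.symm _ _ h, e.symm⟩
    · exact Or.inr ⟨e.symm, H.symm _ _ h⟩

/-- The Cartesian product `□_i G i` of a finite family of graphs with loops. -/
def boxPi {k : ℕ} {V : Fin k → Type*} (G : ∀ i, LoopGraph (V i)) :
    LoopGraph (∀ i, V i) where
  adj x y := ∃ i, (G i).adj (x i) (y i) ∧ ∀ j, j ≠ i → x j = y j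
  symm x y h := by
    obtain ⟨i, h1, h2⟩ := h
    exact ⟨i, (G i).symm _ _ h1, fun j hj => (h2 j hj).symm⟩

/-- Two graphs with loops are isomorphic if there is a bijection of the vertex
types preserving and reflecting adjacency. -/
def IsIsomorphic {V W : Type*} (G : LoopGraph V) (H : LoopGraph W) : Prop :=
  ∃ φ : V ≃ W, ∀ u v, G.adj u v ↔ H.adj (φ u) (φ v)

/-- `N G` is `G` with its loops removed, as a simple graph. -/
def N {V : Type*} (G : LoopGraph V) : SimpleGraph V where
  Adj u v := u ≠ v ∧ G.adj u v
  symm := ⟨fun _ _ h => ⟨h.1.symm, G.symm _ _ h.2⟩⟩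
  loopless := ⟨fun _ h => h.1 rfl⟩

/-- `G` with its loops removed, as a graph with loops. -/
def removeLoops {V : Type*} (G : LoopGraph V) : LoopGraph V where
  adj u v := u ≠ v ∧ G.adj u v
  symm u v h := ⟨h.1.symm, G.symm _ _ h.2⟩

/-- `G` with a loop attached to every vertex. -/
def fullLoops {V : Type*} (G : LoopGraph V) : LoopGraph V where
  adj u v := G.adj u v ∨ u = v
  symm u v h := by
    rcases h with h | h
    · exact Or.inl (G.symm _ _ h)
    · exact Or.inr h.symm

/-- A graph with loops is trivial if it has exactly one vertex and no loop. -/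
def IsTrivial {V : Type*} (G : LoopGraph V) : Prop :=
  (∃ v : V, ∀ w : V, w = v) ∧ ∀ v, ¬ G.adj v v

/-- A nontrivial connected graph with loops with at least one unlooped vertex is
irreducible if in every factorization into two factors, one factor is trivial. -/
def Irreducible {V : Type u} (G : LoopGraph V) : Prop :=
  ¬ G.IsTrivial ∧ G.N.Connected ∧ (∃ v, ¬ G.adj v v) ∧
    ∀ (W L : Type u) (H : LoopGraph W) (K : LoopGraph L),
      G.IsIsomorphic (H.box K) → H.IsTrivial ∨ K.IsTrivial

/-- A set of vertices is convex if every shortest walk (in `N G`) between two of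
its vertices stays inside the set. -/
def ConvexSet {V : Type*} (G : LoopGraph V) (S : Set V) : Prop :=
  ∀ u ∈ S, ∀ v ∈ S, ∀ p : G.N.Walk u v,
    p.length = G.N.dist u v → ∀ x ∈ p.support, x ∈ S

/-- The disjoint union of two graphs with loops. -/
def disjUnion {W U : Type*} (H : LoopGraph W) (K : LoopGraph U) :
    LoopGraph (W ⊕ U) where
  adj x y := Sum.LiftRel H.adj K.adj x y
  symm x y h := by
    cases h with
    | inl h => exact Sum.LiftRel.inl (H.symm _ _ h)
    | inr h => exact Sum.LiftRel.inr (K.symm _ _ h)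

/-- The trivial graph `K₁`: one vertex, no loop. -/
def K1 : LoopGraph PUnit := ⟨fun _ _ => False, fun _ _ h => h.elim⟩

/-- The single looped vertex `K₁*`. -/
def K1star : LoopGraph PUnit := ⟨fun _ _ => True, fun _ _ _ => trivial⟩

/-- The 0/1 adjacency matrix of a graph with loops. -/
def adjMatrix {V : Type*} (G : LoopGraph V) [DecidableRel G.adj] : Matrix V V ℕ :=
  Matrix.of fun u v => if G.adj u v then 1 else 0

end LoopGraph

namespace LoopGraph

variable {V W W₁ W₂ : Type*}

theorem ext {G H : LoopGraph V} (h : ∀ u v, G.adj u v ↔ H.adj u v) : G = H := by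
  obtain ⟨adjG, _⟩ := G
  obtain ⟨adjH, _⟩ := H
  congr
  funext u v
  exact propext (h u v)

theorem IsIsomorphic.box_congr_right (G : LoopGraph V) {H₁ : LoopGraph W₁} {H₂ : LoopGraph W₂}
    (h : H₁.IsIsomorphic H₂) : (G.box H₁).IsIsomorphic (G.box H₂) := by
  obtain ⟨φ, hφ⟩ := h
  refine ⟨(Equiv.refl V).prodCongr φ, ?_⟩
  rintro ⟨v, w⟩ ⟨v', w'⟩
  simp [box, hφ, φ.injective.eq_iff]

/-- A loop of `G □ H` at `(v, w)` coming from `H` is also supplied by the loop of `G` at `v`. -/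
theorem box_removeLoops {G : LoopGraph V} (hG : ∀ v, G.adj v v) (H : LoopGraph W) :
    G.box H.removeLoops = G.box H := by
  refine ext fun ⟨v, w⟩ ⟨v', w'⟩ => ?_
  by_cases hw : w = w'
  · subst hw
    have loop_of_eq : ∀ {K : LoopGraph W}, v = v' ∧ K.adj w w → G.adj v v' :=
      fun ⟨hv, _⟩ => hv ▸ hG v
    simp only [box, and_true, or_iff_left_of_imp loop_of_eq]
  · simp [box, removeLoops, hw]

end LoopGraph

/-- If `G` is entirely looped and `N(H₁) ≅ N(H₂)`, then
`G □ H₁ ≅ G □ H₂`. -/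
theorem box_iso_of_removeLoops_iso {V W₁ W₂ : Type*}
    (G : LoopGraph V) (H₁ : LoopGraph W₁) (H₂ : LoopGraph W₂)
    (hG : ∀ v, G.adj v v)
    (h : H₁.removeLoops.IsIsomorphic H₂.removeLoops) :
    (G.box H₁).IsIsomorphic (G.box H₂) := by
  rw [← LoopGraph.box_removeLoops hG H₁, ← LoopGraph.box_removeLoops hG H₂]
  exact h.box_congr_right G
end

section
/- (Convex subgraphs of products are boxes.) Let (G i)_{i : Fin k} be a finite family of finite connected graphs with loops and let S be a nonempty set of vertices of the Cartesian product □_i G i. Then S is convex in □_i G i if and only if S is the box of its projections, i.e., S = { x | ∀ i, x i ∈ p_i(S) } where p_i(S) = { x i | x ∈ S }, and each projection p_i(S) is convex in G i. -/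
universe u

/-!
Distances in `□_i G i` add up over the coordinates: a walk changes one coordinate per step, and
shortest walks in the factors can be run one coordinate after the other. Hence the geodesic
interval `I(u, v)` of the product is the product of the intervals `I(u i, v i)`, and convexity
of `S` amounts to closure of `S` under geodesic intervals. A convex `S` contains, with `a` and
`b`, the vertex obtained from `a` by changing one coordinate to that of `b` (it lies in
`I(a, b)`); doing this coordinate by coordinate reaches every point of the box of projections.
-/

theorem Set.eq_setOf_forall_mem_image_of_update_mem {ι : Type*} [Fintype ι] [DecidableEq ι]
    {β : ι → Type*} {S : Set (∀ i, β i)} (hS : S.Nonempty)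
    (hupdate : ∀ a ∈ S, ∀ b ∈ S, ∀ i, Function.update a i (b i) ∈ S) :
    S = {x | ∀ i, x i ∈ (fun y => y i) '' S} := by
  refine Set.Subset.antisymm (fun x hx i => ⟨x, hx, rfl⟩) fun x hx => ?_
  have agree : ∀ s : Finset ι, ∃ a ∈ S, ∀ i ∈ s, a i = x i := by
    intro s
    induction s using Finset.induction_on with
    | empty => exact ⟨hS.some, hS.some_mem, by simp⟩
    | insert j s _ ih =>
      obtain ⟨a, ha, hax⟩ := ih
      obtain ⟨b, hb, hbx⟩ := hx j
      refine ⟨Function.update a j (b j), hupdate a ha b hb j, fun i hi => ?_⟩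
      rcases eq_or_ne i j with rfl | hij
      · simpa using hbx
      · rw [Function.update_of_ne hij, hax i ((Finset.mem_insert.mp hi).resolve_left hij)]
  obtain ⟨a, ha, hax⟩ := agree Finset.univ
  rwa [← funext fun i => hax i (Finset.mem_univ i)]

namespace LoopGraph

open SimpleGraph Function

section Interval

variable {V : Type*} (G : LoopGraph V)

/-- The geodesic interval `I(u, v)`. -/
def interval (u v : V) : Set V :=
  {x | G.N.dist u x + G.N.dist x v = G.N.dist u v}

variable {G}

@[simp]
lemma left_mem_interval (u v : V) : u ∈ G.interval u v := by
  simp [interval]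

@[simp]
lemma right_mem_interval (u v : V) : v ∈ G.interval u v := by
  simp [interval]

lemma mem_interval_of_mem_support {u v x : V} (p : G.N.Walk u v)
    (hp : p.length = G.N.dist u v) (hx : x ∈ p.support) : x ∈ G.interval u v := by
  classical
  refine le_antisymm ?_ (Reachable.dist_triangle_left ⟨p.takeUntil x hx⟩ v)
  calc G.N.dist u x + G.N.dist x v
      ≤ (p.takeUntil x hx).length + (p.dropUntil x hx).length :=
        add_le_add (dist_le _) (dist_le _)
    _ = G.N.dist u v := by rw [← Walk.length_append, p.take_spec hx, hp]

lemma convexSet_iff_interval_subset (hconn : G.N.Connected) {S : Set V} :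
    G.ConvexSet S ↔ ∀ u ∈ S, ∀ v ∈ S, G.interval u v ⊆ S := by
  refine ⟨fun hS u hu v hv x hx => ?_, fun hS u hu v hv p hp x hx =>
    hS u hu v hv (mem_interval_of_mem_support p hp hx)⟩
  obtain ⟨p, hp⟩ := hconn.exists_walk_length_eq_dist u x
  obtain ⟨q, hq⟩ := hconn.exists_walk_length_eq_dist x v
  refine hS u hu v hv (p.append q) (by rw [Walk.length_append, hp, hq, hx]) x ?_
  exact (p.mem_support_append_iff q).mpr (Or.inl p.end_mem_support)

end Interval

section BoxPi

variable {k : ℕ} {V : Fin k → Type*} (G : ∀ i, LoopGraph (V i))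

def updateHom (a : ∀ i, V i) (i : Fin k) : (G i).N →g (boxPi G).N where
  toFun := update a i
  map_rel' {x y} h := ⟨(update_injective a i).ne h.1, i, by simpa using h.2,
    fun j hj => by simp [update_of_ne hj]⟩

@[simp]
lemma updateHom_apply (a : ∀ i, V i) (i : Fin k) (x : V i) : updateHom G a i x = update a i x :=
  rfl

variable {G}

lemma sum_dist_eq_one_of_adj {x y : ∀ i, V i} (h : (boxPi G).N.Adj x y) :
    ∑ i, (G i).N.dist (x i) (y i) = 1 := by
  obtain ⟨hne, i, hadj, hrest⟩ := h
  have hi : x i ≠ y i := fun e => hne (funext fun j => by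
    rcases eq_or_ne j i with rfl | hj
    exacts [e, hrest j hj])
  rw [Finset.sum_eq_single i (fun j _ hj => by simp [hrest j hj]) (by simp)]
  exact dist_eq_one_iff_adj.mpr ⟨hi, hadj⟩

variable (hconn : ∀ i, (G i).N.Connected)
include hconn

lemma sum_dist_le_length {u v : ∀ i, V i} (p : (boxPi G).N.Walk u v) :
    ∑ i, (G i).N.dist (u i) (v i) ≤ p.length := by
  induction p with
  | nil => simp
  | @cons u w v h q ih =>
    calc ∑ i, (G i).N.dist (u i) (v i)
        ≤ ∑ i, ((G i).N.dist (u i) (w i) + (G i).N.dist (w i) (v i)) :=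
          Finset.sum_le_sum fun i _ => (hconn i).dist_triangle
      _ = 1 + ∑ i, (G i).N.dist (w i) (v i) := by
          rw [Finset.sum_add_distrib, sum_dist_eq_one_of_adj h]
      _ ≤ (Walk.cons h q).length := by
          rw [Walk.length_cons]
          omega

lemma exists_walk_length_eq_sum_dist (u v : ∀ i, V i) :
    ∃ p : (boxPi G).N.Walk u v, p.length = ∑ i, (G i).N.dist (u i) (v i) := by
  suffices h : ∀ s : Finset (Fin k), ∀ u : ∀ i, V i, (∀ i ∉ s, u i = v i) →
      ∃ p : (boxPi G).N.Walk u v, p.length = ∑ i, (G i).N.dist (u i) (v i) from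
    h Finset.univ u (by simp)
  intro s
  induction s using Finset.induction_on with
  | empty =>
    intro u hu
    obtain rfl : u = v := funext fun i => hu i (Finset.notMem_empty i)
    exact ⟨.nil, by simp⟩
  | insert j s _ ih =>
    intro u hu
    set u' := update u j (v j)
    obtain ⟨q, hq⟩ := ih u' fun i hi => by
      rcases eq_or_ne i j with rfl | hij
      · simp [u']
      · simpa [u', update_of_ne hij] using hu i (by simp [hij, hi])
    obtain ⟨r, hr⟩ := (hconn j).exists_walk_length_eq_dist (u j) (v j)
    let step : (boxPi G).N.Walk u u' :=
      (r.map (updateHom G u j)).copy (by simp) (updateHom_apply G u j (v j))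
    refine ⟨step.append q, ?_⟩
    have hsum : ∑ i, (G i).N.dist (u i) (v i) =
        ∑ i, ((if i = j then (G j).N.dist (u j) (v j) else 0) + (G i).N.dist (u' i) (v i)) :=
      Finset.sum_congr rfl fun i _ => by
        rcases eq_or_ne i j with rfl | hij
        · simp [u']
        · simp [u', hij]
    rw [hsum, Finset.sum_add_distrib, Finset.sum_ite_eq', if_pos (Finset.mem_univ j), ← hq,
      Walk.length_append, Walk.length_copy, Walk.length_map, hr]

lemma connected_boxPi : (boxPi G).N.Connected :=
  have : Nonempty (∀ i, V i) := ⟨fun i => (hconn i).nonempty.some⟩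
  ⟨fun u v => ⟨(exists_walk_length_eq_sum_dist hconn u v).choose⟩⟩

lemma dist_boxPi (u v : ∀ i, V i) :
    (boxPi G).N.dist u v = ∑ i, (G i).N.dist (u i) (v i) := by
  obtain ⟨p, hp⟩ := exists_walk_length_eq_sum_dist hconn u v
  obtain ⟨g, hg⟩ := (connected_boxPi hconn).exists_walk_length_eq_dist u v
  exact le_antisymm (hp ▸ dist_le p) (hg ▸ sum_dist_le_length hconn g)

lemma mem_interval_boxPi {u v x : ∀ i, V i} :
    x ∈ (boxPi G).interval u v ↔ ∀ i, x i ∈ (G i).interval (u i) (v i) := by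
  simp only [interval, Set.mem_ofPred_eq, dist_boxPi hconn, ← Finset.sum_add_distrib]
  rw [eq_comm, Finset.sum_eq_sum_iff_of_le fun i _ => (hconn i).dist_triangle]
  simp [eq_comm]

lemma update_mem_interval_boxPi {u v : ∀ i, V i} {i : Fin k} {x : V i}
    (hx : x ∈ (G i).interval (u i) (v i)) : update u i x ∈ (boxPi G).interval u v := by
  refine (mem_interval_boxPi hconn).mpr fun j => ?_
  rcases eq_or_ne j i with rfl | hj
  · simpa using hx
  · simp [update_of_ne hj]

end BoxPi

end LoopGraph

theorem convexSet_iff_box_general {k : ℕ} {V : Fin k → Type*}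
    (G : ∀ i, LoopGraph (V i)) (hconn : ∀ i, (G i).N.Connected)
    (S : Set (∀ i, V i)) (hS : S.Nonempty) :
    (LoopGraph.boxPi G).ConvexSet S ↔
      (S = {x | ∀ i, x i ∈ (fun y => y i) '' S} ∧
        ∀ i, (G i).ConvexSet ((fun y => y i) '' S)) := by
  simp only [LoopGraph.convexSet_iff_interval_subset (LoopGraph.connected_boxPi hconn),
    LoopGraph.convexSet_iff_interval_subset (hconn _)]
  constructor
  · intro hconv
    have hupdate : ∀ a ∈ S, ∀ b ∈ S, ∀ i, Function.update a i (b i) ∈ S :=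
      fun a ha b hb i => hconv a ha b hb
        (LoopGraph.update_mem_interval_boxPi hconn (LoopGraph.right_mem_interval (a i) (b i)))
    refine ⟨Set.eq_setOf_forall_mem_image_of_update_mem hS hupdate, ?_⟩
    rintro i _ ⟨a, ha, rfl⟩ _ ⟨b, hb, rfl⟩ x hx
    exact ⟨Function.update a i x,
      hconv a ha b hb (LoopGraph.update_mem_interval_boxPi hconn hx), by simp⟩
  · rintro ⟨hbox, hproj⟩ u hu v hv x hx
    rw [hbox]
    exact fun i => hproj i _ ⟨u, hu, rfl⟩ _ ⟨v, hv, rfl⟩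
      ((LoopGraph.mem_interval_boxPi hconn).mp hx i)

/-- Convex subgraphs of products are boxes: a nonempty vertex set
`S` of `□_i G i` is convex iff `S` is the box of its projections and every
projection is convex. -/
theorem convexSet_iff_box {k : ℕ} {V : Fin k → Type*} [∀ i, Fintype (V i)]
    (G : ∀ i, LoopGraph (V i)) (hconn : ∀ i, (G i).N.Connected)
    (S : Set (∀ i, V i)) (hS : S.Nonempty) :
    (LoopGraph.boxPi G).ConvexSet S ↔
      (S = {x | ∀ i, x i ∈ (fun y => y i) '' S} ∧
        ∀ i, (G i).ConvexSet ((fun y => y i) '' S)) :=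
  convexSet_iff_box_general G hconn S hS
end

section
/- (Existence of prime factorizations.) Every nontrivial, connected finite graph with loops G having at least one unlooped vertex is isomorphic to a Cartesian product □_{i : Fin k} G i (k ≥ 1) in which every factor G i is irreducible. -/
universe u

/-!
Induction on the number of vertices. An irreducible graph is its own factorization. Otherwise
`G ≅ H □ K` with `H` and `K` nontrivial; both inherit connectedness and an unlooped vertex from
`G`, so each has at least two vertices and is strictly smaller than `G`. Their factorizations
are concatenated one factor at a time through `□_{i < k+1} G i ≅ G 0 □ □_{i < k} G (i+1)`, and
the number of factors is positive because the empty product is trivial.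
-/

namespace LoopGraph

section Isomorphism

variable {V W U X : Type*} {G : LoopGraph V} {H : LoopGraph W} {K : LoopGraph U}

theorem IsIsomorphic.refl (G : LoopGraph V) : G.IsIsomorphic G :=
  ⟨Equiv.refl V, fun _ _ => Iff.rfl⟩

theorem IsIsomorphic.symm (h : G.IsIsomorphic H) : H.IsIsomorphic G := by
  obtain ⟨φ, hφ⟩ := h
  exact ⟨φ.symm, fun u v => by rw [hφ, φ.apply_symm_apply, φ.apply_symm_apply]⟩

theorem IsIsomorphic.trans (hGH : G.IsIsomorphic H) (hHK : H.IsIsomorphic K) :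
    G.IsIsomorphic K := by
  obtain ⟨φ, hφ⟩ := hGH
  obtain ⟨ψ, hψ⟩ := hHK
  exact ⟨φ.trans ψ, fun u v => (hφ u v).trans (hψ _ _)⟩

theorem IsIsomorphic.box_congr {G' : LoopGraph U} {H' : LoopGraph X} (hG : G.IsIsomorphic G')
    (hH : H.IsIsomorphic H') : (G.box H).IsIsomorphic (G'.box H') := by
  obtain ⟨φ, hφ⟩ := hG
  obtain ⟨ψ, hψ⟩ := hH
  refine ⟨φ.prodCongr ψ, fun p q => ?_⟩
  simp only [box, Equiv.prodCongr_apply, Prod.map, hφ, hψ, EmbeddingLike.apply_eq_iff_eq]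

theorem isIsomorphic_box_comm (G : LoopGraph V) (H : LoopGraph W) :
    (G.box H).IsIsomorphic (H.box G) := by
  refine ⟨Equiv.prodComm V W, fun p q => ?_⟩
  simp only [box, Equiv.prodComm_apply, Prod.fst_swap, Prod.snd_swap]
  tauto

theorem isIsomorphic_box_assoc (G : LoopGraph V) (H : LoopGraph W) (K : LoopGraph U) :
    ((G.box H).box K).IsIsomorphic (G.box (H.box K)) := by
  refine ⟨Equiv.prodAssoc V W U, fun p q => ?_⟩
  simp only [box, Equiv.prodAssoc_apply, Prod.ext_iff]
  tauto

theorem IsIsomorphic.isTrivial (h : G.IsIsomorphic H) (hG : G.IsTrivial) : H.IsTrivial := by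
  obtain ⟨φ, hφ⟩ := h
  obtain ⟨⟨v, hv⟩, hloop⟩ := hG
  refine ⟨⟨φ v, fun w => ?_⟩, fun w hw => hloop (φ.symm w) ?_⟩
  · rw [← φ.apply_symm_apply w, hv (φ.symm w)]
  · rwa [hφ, φ.apply_symm_apply]

theorem IsIsomorphic.exists_unlooped (h : G.IsIsomorphic H) (hG : ∃ v, ¬ G.adj v v) :
    ∃ w, ¬ H.adj w w := by
  obtain ⟨φ, hφ⟩ := h
  obtain ⟨v, hv⟩ := hG
  exact ⟨φ v, (hφ v v).not.mp hv⟩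

theorem IsIsomorphic.connected (h : G.IsIsomorphic H) (hG : G.N.Connected) : H.N.Connected := by
  obtain ⟨φ, hφ⟩ := h
  let e : G.N ≃g H.N := ⟨φ, fun {u v} => by simp only [N, hφ, ne_eq, φ.apply_eq_iff_eq]⟩
  exact e.connected_iff.mp hG

end Isomorphism

section Box

variable {V W U : Type*}

theorem N_box (H : LoopGraph W) (K : LoopGraph U) : (H.box K).N = H.N □ K.N := by
  ext p q
  simp only [N, box, SimpleGraph.boxProd_adj, ne_eq, Prod.ext_iff]
  tauto

theorem exists_unlooped_of_box {H : LoopGraph W} {K : LoopGraph U}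
    (h : ∃ p, ¬ (H.box K).adj p p) : (∃ a, ¬ H.adj a a) ∧ ∃ b, ¬ K.adj b b := by
  obtain ⟨⟨a, b⟩, hp⟩ := h
  exact ⟨⟨a, fun ha => hp (Or.inl ⟨ha, rfl⟩)⟩, ⟨b, fun hb => hp (Or.inr ⟨rfl, hb⟩)⟩⟩

theorem IsTrivial.box_isIsomorphic {H : LoopGraph W} (hH : H.IsTrivial) (K : LoopGraph U) :
    (H.box K).IsIsomorphic K := by
  obtain ⟨⟨w, hw⟩, hloop⟩ := hH
  have : Unique W := ⟨⟨w⟩, hw⟩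
  refine ⟨Equiv.uniqueProd U W, fun p q => ?_⟩
  simp only [box, Equiv.uniqueProd_apply, Subsingleton.elim p.1 q.1, hloop, true_and, false_and,
    false_or]

theorem isTrivial_boxPi_zero {W : Fin 0 → Type*} (F : ∀ i, LoopGraph (W i)) :
    (boxPi F).IsTrivial :=
  ⟨⟨isEmptyElim, fun _ => funext isEmptyElim⟩, fun _ ⟨i, _⟩ => i.elim0⟩

theorem isIsomorphic_boxPi_succ {k : ℕ} {W : Fin (k + 1) → Type*} (F : ∀ i, LoopGraph (W i)) :
    (boxPi F).IsIsomorphic ((F 0).box (boxPi fun i => F i.succ)) := by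
  refine ⟨(Fin.consEquiv W).symm, fun x y => ?_⟩
  simp only [boxPi, box, Fin.consEquiv_symm_apply, Fin.exists_fin_succ, Fin.forall_fin_succ,
    funext_iff, Fin.tail]
  grind

theorem isIsomorphic_boxPi_fin_one (G : LoopGraph V) :
    G.IsIsomorphic (boxPi fun _ : Fin 1 => G) := by
  refine ⟨(Equiv.funUnique (Fin 1) V).symm, fun u v => ⟨fun h => ⟨0, h, fun j hj => ?_⟩, ?_⟩⟩
  · exact absurd (Subsingleton.elim j 0) hj
  · rintro ⟨_, h, -⟩
    exact h

end Box

theorem nontrivial_of_not_isTrivial {V : Type*} {G : LoopGraph V} (hnt : ¬ G.IsTrivial)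
    (hul : ∃ v, ¬ G.adj v v) : Nontrivial V := by
  obtain ⟨v, hv⟩ := hul
  by_contra hV
  rw [not_nontrivial_iff_subsingleton] at hV
  exact hnt ⟨⟨v, fun w => Subsingleton.elim w v⟩, fun w hw => hv (Subsingleton.elim w v ▸ hw)⟩

theorem finite_and_card_lt_of_equiv_prod {V W U : Type*} [Finite V] [Nonempty V] [Nontrivial U]
    (e : V ≃ W × U) : Finite W ∧ Nat.card W < Nat.card V := by
  have : Finite (W × U) := Finite.of_equiv V e
  have : Nonempty W := ⟨(e (Classical.arbitrary V)).1⟩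
  have : Finite W := Finite.prod_left U
  have : Finite U := Finite.prod_right W
  refine ⟨inferInstance, ?_⟩
  rw [Nat.card_congr e, Nat.card_prod]
  exact lt_mul_of_one_lt_right Nat.card_pos Finite.one_lt_card

/-- The number `k` of factors may be `0`: the empty product is the trivial graph. -/
def HasPrimeFactorization {V : Type u} (G : LoopGraph V) : Prop :=
  ∃ (k : ℕ) (W : Fin k → Type u) (F : ∀ i, LoopGraph (W i)),
    (∀ i, (F i).Irreducible) ∧ G.IsIsomorphic (boxPi F)

section PrimeFactorization

variable {V W U : Type u} {G : LoopGraph V} {H : LoopGraph W} {K : LoopGraph U}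

theorem HasPrimeFactorization.of_isIsomorphic (hH : H.HasPrimeFactorization)
    (h : G.IsIsomorphic H) : G.HasPrimeFactorization := by
  obtain ⟨k, W, F, hF, hHF⟩ := hH
  exact ⟨k, W, F, hF, h.trans hHF⟩

theorem Irreducible.hasPrimeFactorization (hG : G.Irreducible) : G.HasPrimeFactorization :=
  ⟨1, fun _ => V, fun _ => G, fun _ => hG, isIsomorphic_boxPi_fin_one G⟩

theorem HasPrimeFactorization.box_of_irreducible (hH : H.Irreducible)
    (hK : K.HasPrimeFactorization) : (H.box K).HasPrimeFactorization := by
  obtain ⟨k, W', F, hF, hKF⟩ := hK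
  let W'' : Fin (k + 1) → Type u := Fin.cons W W'
  let F' : ∀ i, LoopGraph (W'' i) := Fin.cons H F
  refine ⟨k + 1, W'', F', Fin.forall_fin_succ.mpr ⟨hH, hF⟩, ?_⟩
  exact ((IsIsomorphic.refl H).box_congr hKF).trans (isIsomorphic_boxPi_succ F').symm

theorem HasPrimeFactorization.boxPi_box {k : ℕ} {W : Fin k → Type u}
    {F : ∀ i, LoopGraph (W i)} (hF : ∀ i, (F i).Irreducible) (hK : K.HasPrimeFactorization) :
    ((boxPi F).box K).HasPrimeFactorization := by
  induction k with
  | zero => exact hK.of_isIsomorphic ((isTrivial_boxPi_zero F).box_isIsomorphic K)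
  | succ k ih =>
    have hTK := ih (W := fun i => W i.succ) (F := fun i => F i.succ) (fun i => hF i.succ)
    refine (box_of_irreducible (hF 0) hTK).of_isIsomorphic ?_
    exact ((isIsomorphic_boxPi_succ F).box_congr (IsIsomorphic.refl K)).trans
      (isIsomorphic_box_assoc _ _ _)

theorem HasPrimeFactorization.box (hH : H.HasPrimeFactorization)
    (hK : K.HasPrimeFactorization) : (H.box K).HasPrimeFactorization := by
  obtain ⟨k, W, F, hF, hHF⟩ := hH
  exact (boxPi_box hF hK).of_isIsomorphic (hHF.box_congr (IsIsomorphic.refl K))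

end PrimeFactorization

theorem hasPrimeFactorization_of_connected {V : Type u} [Finite V] (G : LoopGraph V)
    (hnt : ¬ G.IsTrivial) (hconn : G.N.Connected) (hul : ∃ v, ¬ G.adj v v) :
    G.HasPrimeFactorization := by
  induction h : Nat.card V using Nat.strong_induction_on generalizing V with
  | _ n ih =>
    by_cases hirr : G.Irreducible
    · exact hirr.hasPrimeFactorization
    have hfactor : ∃ (W U : Type u) (H : LoopGraph W) (K : LoopGraph U),
        G.IsIsomorphic (H.box K) ∧ ¬ H.IsTrivial ∧ ¬ K.IsTrivial := by
      simpa [Irreducible, hnt, hconn, hul] using hirr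
    have hleft : ∀ {W U : Type u} (H : LoopGraph W) (K : LoopGraph U),
        G.IsIsomorphic (H.box K) → ¬ H.IsTrivial → ¬ K.IsTrivial →
          H.HasPrimeFactorization := by
      intro W U H K hGHK hH hK
      obtain ⟨hHul, hKul⟩ := exists_unlooped_of_box (hGHK.exists_unlooped hul)
      have : Nontrivial U := nontrivial_of_not_isTrivial hK hKul
      have : Nonempty V := hconn.nonempty
      obtain ⟨_, hlt⟩ := finite_and_card_lt_of_equiv_prod hGHK.choose
      have hHconn : H.N.Connected := (N_box H K ▸ hGHK.connected hconn).ofBoxProdLeft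
      exact ih _ (h ▸ hlt) H hH hHconn hHul rfl
    obtain ⟨W, U, H, K, hGHK, hH, hK⟩ := hfactor
    exact ((hleft H K hGHK hH hK).box
      (hleft K H (hGHK.trans (isIsomorphic_box_comm H K)) hK hH)).of_isIsomorphic hGHK

end LoopGraph

/-- Existence of prime factorizations: every nontrivial, connected
finite graph with loops with at least one unlooped vertex is isomorphic to a
Cartesian product of irreducible graphs. -/
theorem prime_factorization_exists {V : Type u} [Fintype V] (G : LoopGraph V)
    (hnt : ¬ G.IsTrivial) (hconn : G.N.Connected) (hul : ∃ v, ¬ G.adj v v) :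
    ∃ k : ℕ, 1 ≤ k ∧
      ∃ (W : Fin k → Type u) (F : ∀ i, LoopGraph (W i)),
        (∀ i, (F i).Irreducible) ∧ G.IsIsomorphic (LoopGraph.boxPi F) := by
  obtain ⟨k, W, F, hF, hGF⟩ := G.hasPrimeFactorization_of_connected hnt hconn hul
  refine ⟨k, Nat.one_le_iff_ne_zero.mpr ?_, W, F, hF, hGF⟩
  rintro rfl
  exact hnt (hGF.symm.isTrivial (LoopGraph.isTrivial_boxPi_zero F))
end

section
/- The number of nontrivial factors in a Cartesian product decomposition of a connected graph is bounded by every vertex degree: if G = □_{i : Fin k} G i is a finite graph with loops such that N(G) is connected and every factor G i has at least two vertices, then for every vertex v of G, k is at most the degree of v in the simple graph N(G). In particular, k is at most the minimum degree of N(G). -/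
universe u

/-! Projecting `N(□_i G i)` to a coordinate sends every edge to an edge or to a single vertex,
so every factor of a connected product is connected. A connected factor with two vertices gives
each `v i` a neighbour `a i ≠ v i`, and changing `v` in coordinate `i` alone to `a i` yields `k`
distinct neighbours of `v`. -/

theorem Function.injective_update_self_of_ne {ι : Type*} [DecidableEq ι] {β : ι → Type*}
    {v a : ∀ i, β i} (h : ∀ i, a i ≠ v i) :
    Function.Injective fun i => Function.update v i (a i) := by
  intro i j hij
  by_contra hne
  have := congrFun hij i
  simp only [Function.update_self, Function.update_of_ne hne] at this
  exact h i this

namespace LoopGraph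

variable {k : ℕ} {V : Fin k → Type*} {G : ∀ i, LoopGraph (V i)}

theorem apply_eq_or_N_adj_apply_of_N_adj_boxPi {x y : ∀ i, V i}
    (h : (boxPi G).N.Adj x y) (i : Fin k) : x i = y i ∨ (G i).N.Adj (x i) (y i) := by
  obtain ⟨-, j, hadj, hothers⟩ := h
  by_cases hij : i = j
  · subst hij
    exact or_iff_not_imp_left.mpr fun hne => ⟨hne, hadj⟩
  · exact Or.inl (hothers i hij)

theorem N_reachable_apply_of_N_reachable_boxPi {x y : ∀ i, V i}
    (h : (boxPi G).N.Reachable x y) (i : Fin k) : (G i).N.Reachable (x i) (y i) := by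
  rw [SimpleGraph.reachable_iff_reflTransGen] at h ⊢
  refine h.lift' (· i) fun a b hab => show Relation.ReflTransGen _ (a i) (b i) from ?_
  rcases apply_eq_or_N_adj_apply_of_N_adj_boxPi hab i with heq | hadj
  · exact heq ▸ Relation.ReflTransGen.refl
  · exact Relation.ReflTransGen.single hadj

theorem N_connected_of_N_connected_boxPi (h : (boxPi G).N.Connected) (i : Fin k) :
    (G i).N.Connected := by
  obtain ⟨x⟩ := h.nonempty
  have : Nonempty (V i) := ⟨x i⟩
  refine SimpleGraph.Connected.mk fun a b => ?_
  simpa using N_reachable_apply_of_N_reachable_boxPi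
    (h.preconnected (Function.update x i a) (Function.update x i b)) i

theorem N_adj_boxPi_update {x : ∀ i, V i} {i : Fin k} {a : V i} (h : (G i).N.Adj (x i) a) :
    (boxPi G).N.Adj x (Function.update x i a) := by
  refine ⟨fun heq => h.ne ?_, i, by simpa using h.2, fun j hj => ?_⟩
  · simpa using congrFun heq i
  · simp [Function.update_of_ne hj]

end LoopGraph

/-- if `N(□_i G i)` is connected and every factor has at least two
vertices, then the number of factors is at most the degree of every vertex in the
simple graph `N(□_i G i)`. -/
theorem num_factors_le_degree {k : ℕ} {V : Fin k → Type*} [∀ i, Fintype (V i)]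
    (G : ∀ i, LoopGraph (V i))
    (hconn : (LoopGraph.boxPi G).N.Connected)
    (hcard : ∀ i, 1 < Fintype.card (V i)) :
    ∀ v : ∀ i, V i, k ≤ {w | (LoopGraph.boxPi G).N.Adj v w}.ncard := by
  intro v
  have hnbr (i : Fin k) : ∃ a, (G i).N.Adj (v i) a :=
    have := Fintype.one_lt_card_iff_nontrivial.mp (hcard i)
    (LoopGraph.N_connected_of_N_connected_boxPi hconn i).preconnected.exists_adj_of_nontrivial _
  choose a ha using hnbr
  have hinj := Function.injective_update_self_of_ne fun i => (ha i).ne.symm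
  calc k = (Set.univ : Set (Fin k)).ncard := by simp
    _ ≤ _ := Set.ncard_le_ncard_of_injOn _ (fun i _ => LoopGraph.N_adj_boxPi_update (ha i))
        hinj.injOn
end
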